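/- For m ≥ 1 and real α, β ≥ 0 with α + β < 1/(4(2m+1)), the triangle with vertices (-1,-1), (m-1,0)+α(1,-2), ((2m-3)/4,(2m-1)/2)+β(-1,2) has area strictly less than m²/2. -/
import Mathlib


noncomputable section

/-- The area of the triangle with the given vertices, via the determinant formula. -/
def triArea (v₁ v₂ v₃ : ℝ × ℝ) : ℝ :=
  |(v₂.1 - v₁.1) * (v₃.2 - v₁.2) - (v₃.1 - v₁.1) * (v₂.2 - v₁.2)| / 2

/-- If `α + β < 1/(4(2m+1))` then the triangle `Δ₂` has area strictly less than `m²/2`. -/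
theorem stmt13 (m : ℕ) (hm : 1 ≤ m) (α β : ℝ) (hα : 0 ≤ α) (hβ : 0 ≤ β)
    (hlt : α + β < 1 / (4 * (2 * (m : ℝ) + 1))) :
    triArea ((-1 : ℝ), (-1 : ℝ)) ((m : ℝ) - 1 + α, -2 * α)
        ((2 * (m : ℝ) - 3) / 4 - β, (2 * (m : ℝ) - 1) / 2 + 2 * β)
      < (m : ℝ) ^ 2 / 2 := by
  have hm1 : (1:ℝ) ≤ m := by exact_mod_cast hm
  have hpos : (0:ℝ) < 4 * (2 * (m : ℝ) + 1) := by nlinarith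
  have key : (2 * (m : ℝ) + 1) * (α + β) < 1 / 4 := by
    have := (lt_div_iff₀ hpos).mp hlt
    nlinarith
  rw [triArea, abs_of_nonneg (by nlinarith)]
  nlinarith
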